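/- For every integer N ≥ 1 one has r̄_N r_{N−1} − r_N r̄_{N−1} = −2μ/√t; equivalently, the quantity L_N := r̄_N r_{N−1} − r_N r̄_{N−1} is constant in N and equal to −2μ/√t. -/

import Mathlib

open scoped BigOperators

/-- The modified Bessel function of the first kind,
`I_α(x) = Σ_{m=0}^∞ (x/2)^(2m+α) / (m! · Γ(α+m+1))`,
with `1/Γ` interpreted via the entire reciprocal Gamma function
(Mathlib's `Real.Gamma` vanishes at the poles). -/
noncomputable def besselI (α x : ℝ) : ℝ :=
  ∑' m : ℕ, (x / 2) ^ (2 * (m : ℝ) + α) / ((m.factorial : ℝ) * Real.Gamma (α + m + 1))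

/-- The Toeplitz determinant `D^ε_N(t) = det[ I_{μ+ε+j−k}(√t) ]_{1≤j,k≤N}`,
with `D^ε_0(t) = 1` (the empty determinant). -/
noncomputable def toeplitzDet (μ : ℝ) (ε : ℤ) (N : ℕ) (t : ℝ) : ℝ :=
  Matrix.det (Matrix.of fun j k : Fin N =>
    besselI (μ + ε + ((j : ℕ) : ℝ) - ((k : ℕ) : ℝ)) (Real.sqrt t))

/-- The reflection coefficient `r_N(t) = (−1)^N D^1_N(t)/D^0_N(t)`. -/
noncomputable def rcoef (μ : ℝ) (N : ℕ) (t : ℝ) : ℝ :=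
  (-1) ^ N * toeplitzDet μ 1 N t / toeplitzDet μ 0 N t

/-- The reflection coefficient `r̄_N(t) = (−1)^N D^{−1}_N(t)/D^0_N(t)`. -/
noncomputable def rbcoef (μ : ℝ) (N : ℕ) (t : ℝ) : ℝ :=
  (-1) ^ N * toeplitzDet μ (-1) N t / toeplitzDet μ 0 N t

/-!
The Bessel recurrence `I_{α-1}(x) - I_{α+1}(x) = (2α/x) I_α(x)` says that the symbol
coefficients `c_m = I_{μ+m}(√t)` satisfy `c_{m-1} - c_{m+1} = (a + b m) c_m` with `a = 2μ/√t`.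
For any such sequence let `T = (c_{j-k})` be the Toeplitz matrix of size `N` and `T±` those of
`c_{m±1}`; with `B = adj T`, compute the `(0,0)` entry of `B (T₋ - T₊) B` in two ways.
`T₋` is `T` with its columns shifted and `T₊` is `T` with its rows shifted, so Cramer's rule
makes this entry `D⁻_N D⁺_{N-1} - D⁺_N D⁻_{N-1}`. On the other hand
`T₋ - T₊ = a T + b [diag(j), T]`, and `B [diag(j), T] B = det T · [B, diag(j)]` has zero
diagonal, so the entry is `a D⁰_N D⁰_{N-1}`.
-/

-- No hypothesis on `s`: at the poles both sides are `0`, since Mathlib's `Γ` vanishes there.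
theorem Real.inv_Gamma_eq_self_mul_inv_Gamma_add_one (s : ℝ) :
    (Real.Gamma s)⁻¹ = s * (Real.Gamma (s + 1))⁻¹ := by
  have h := Complex.one_div_Gamma_eq_self_mul_one_div_Gamma_add_one s
  rw [← Complex.ofReal_one, ← Complex.ofReal_add, Complex.Gamma_ofReal,
    Complex.Gamma_ofReal] at h
  exact_mod_cast h

noncomputable def besselITerm (α x : ℝ) (m : ℕ) : ℝ :=
  (x / 2) ^ (2 * (m : ℝ) + α) / ((m.factorial : ℝ) * Real.Gamma (α + m + 1))

theorem besselI_eq_tsum (α x : ℝ) : besselI α x = ∑' m, besselITerm α x m := rfl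

section BesselTerm

variable {x : ℝ} (hx : x ≠ 0) (α : ℝ)
include hx

theorem besselITerm_sub_one (m : ℕ) :
    besselITerm (α - 1) x m = 2 * (α + m) / x * besselITerm α x m := by
  have hpow : (x / 2) ^ (2 * (m : ℝ) + α) = (x / 2) ^ (2 * (m : ℝ) + (α - 1)) * (x / 2) := by
    rw [← Real.rpow_add_one (by simpa using hx)]
    ring_nf
  have hGamma := Real.inv_Gamma_eq_self_mul_inv_Gamma_add_one (α + m)
  simp only [besselITerm]
  rw [show α - 1 + m + 1 = α + m by ring, hpow, div_eq_mul_inv, mul_inv, hGamma]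
  field_simp

theorem besselITerm_add_one (m : ℕ) :
    besselITerm (α + 1) x m = 2 * (m + 1) / x * besselITerm α x (m + 1) := by
  have hpow : (x / 2) ^ (2 * ((m + 1 : ℕ) : ℝ) + α)
      = (x / 2) ^ (2 * (m : ℝ) + (α + 1)) * (x / 2) := by
    rw [← Real.rpow_add_one (by simpa using hx)]
    push_cast
    ring_nf
  simp only [besselITerm, Nat.factorial_succ, hpow]
  rw [show α + ((m + 1 : ℕ) : ℝ) + 1 = α + 1 + m + 1 by push_cast; ring]
  push_cast
  field_simp

theorem besselITerm_succ {m : ℕ} (hm : α + m + 1 ≠ 0) :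
    besselITerm α x (m + 1) = (x / 2) ^ 2 / ((m + 1) * (α + m + 1)) * besselITerm α x m := by
  have hpow : (x / 2) ^ (2 * ((m + 1 : ℕ) : ℝ) + α)
      = (x / 2) ^ (2 * (m : ℝ) + α) * (x / 2) ^ 2 := by
    rw [← Real.rpow_add_natCast (by simpa using hx)]
    push_cast
    ring_nf
  simp only [besselITerm, Nat.factorial_succ, hpow]
  rw [show α + ((m + 1 : ℕ) : ℝ) + 1 = (α + m + 1) + 1 by push_cast; ring,
    Real.Gamma_add_one hm]
  push_cast
  field_simp

theorem summable_besselITerm : Summable (besselITerm α x) := by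
  refine summable_of_ratio_norm_eventually_le (r := 1 / 2) (by norm_num) ?_
  filter_upwards [Filter.eventually_ge_atTop ⌈|α|⌉₊, Filter.eventually_ge_atTop ⌈x ^ 2⌉₊]
    with m hα hx2
  have hα' : |α| ≤ m := Nat.ceil_le.mp hα
  have hx2' : x ^ 2 ≤ m := Nat.ceil_le.mp hx2
  have hpos : 1 ≤ α + m + 1 := by linarith [neg_abs_le α]
  have hratio : 0 ≤ (x / 2) ^ 2 / ((m + 1) * (α + m + 1)) := by positivity
  rw [besselITerm_succ hx α (by linarith), norm_mul, Real.norm_of_nonneg hratio]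
  have hhalf : (x / 2) ^ 2 / ((m + 1) * (α + m + 1)) ≤ 1 / 2 := by
    rw [div_le_iff₀ (by positivity)]
    nlinarith
  exact mul_le_mul_of_nonneg_right hhalf (norm_nonneg _)

theorem besselI_sub_one_sub_besselI_add_one :
    besselI (α - 1) x - besselI (α + 1) x = 2 * α / x * besselI α x := by
  set g : ℕ → ℝ := fun m => 2 * m / x * besselITerm α x m
  have hshift : ∀ m, besselITerm (α + 1) x m = g (m + 1) := fun m => by
    simp only [g, besselITerm_add_one hx]
    push_cast
    rfl
  have hg : Summable g :=
    (summable_nat_add_iff 1).mp ((summable_besselITerm hx (α + 1)).congr hshift)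
  have hsplit : ∀ m, besselITerm (α - 1) x m = 2 * α / x * besselITerm α x m + g m :=
      fun m => by
    rw [besselITerm_sub_one hx]
    ring
  have hplus : besselI (α + 1) x = ∑' m, g m := by
    rw [hg.tsum_eq_zero_add, besselI_eq_tsum, tsum_congr hshift]
    simp [g]
  have hminus : besselI (α - 1) x = 2 * α / x * besselI α x + ∑' m, g m := by
    rw [besselI_eq_tsum, tsum_congr hsplit,
      ((summable_besselITerm hx α).mul_left _).tsum_add hg, tsum_mul_left, besselI_eq_tsum]
  rw [hminus, hplus]
  ring

end BesselTerm

theorem Fin.add_one_ne_zero_of_ne_last {n : ℕ} {k : Fin (n + 1)} (hk : k ≠ Fin.last n) :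
    k + 1 ≠ 0 := by
  rw [Ne, ← Fin.val_eq_val, Fin.val_add_one_of_lt (Fin.lt_last_iff_ne_last.mpr hk)]
  simp

namespace Matrix

variable {n : ℕ}

section Toeplitz

variable {α : Type*}

def toeplitz (c : ℤ → α) (n : ℕ) : Matrix (Fin n) (Fin n) α :=
  of fun j k => c ((j : ℤ) - k)

@[simp]
theorem toeplitz_apply (c : ℤ → α) (j k : Fin n) : toeplitz c n j k = c ((j : ℤ) - k) := rfl

variable (c : ℤ → α)

theorem toeplitz_submatrix_succ_succ :
    (toeplitz c (n + 1)).submatrix Fin.succ Fin.succ = toeplitz c n := by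
  ext j k
  simp

theorem toeplitz_submatrix_succ_castSucc :
    (toeplitz c (n + 1)).submatrix Fin.succ Fin.castSucc = toeplitz (fun m => c (m + 1)) n := by
  ext j k
  simp only [submatrix_apply, toeplitz_apply, Fin.val_succ, Fin.val_castSucc]
  congr 1
  push_cast
  ring

theorem toeplitz_submatrix_castSucc_succ :
    (toeplitz c (n + 1)).submatrix Fin.castSucc Fin.succ = toeplitz (fun m => c (m - 1)) n := by
  ext j k
  simp only [submatrix_apply, toeplitz_apply, Fin.val_succ, Fin.val_castSucc]
  congr 1
  push_cast
  ring

theorem toeplitz_pred_apply_of_ne_last {j k : Fin (n + 1)} (hk : k ≠ Fin.last n) :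
    toeplitz (fun m => c (m - 1)) (n + 1) j k = toeplitz c (n + 1) j (k + 1) := by
  simp only [toeplitz_apply, Fin.val_add_one_of_lt (Fin.lt_last_iff_ne_last.mpr hk)]
  congr 1
  push_cast
  ring

theorem toeplitz_succ_apply_of_ne_last {j k : Fin (n + 1)} (hj : j ≠ Fin.last n) :
    toeplitz (fun m => c (m + 1)) (n + 1) j k = toeplitz c (n + 1) (j + 1) k := by
  simp only [toeplitz_apply, Fin.val_add_one_of_lt (Fin.lt_last_iff_ne_last.mpr hj)]
  congr 1
  push_cast
  ring

end Toeplitz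

variable {R : Type*} [CommRing R]

section ShiftedMatrices

variable {A M : Matrix (Fin (n + 1)) (Fin (n + 1)) R}

theorem adjugate_mul_apply_zero_eq_zero_of_col_shift
    (hM : ∀ j k, k ≠ Fin.last n → M j k = A j (k + 1)) {k : Fin (n + 1)} (hk : k ≠ Fin.last n) :
    (adjugate A * M) 0 k = 0 := by
  calc (adjugate A * M) 0 k = (adjugate A * A) 0 (k + 1) := by
        simp only [mul_apply, hM _ k hk]
    _ = 0 := by simp [adjugate_mul, (Fin.add_one_ne_zero_of_ne_last hk).symm]

theorem adjugate_mul_apply_zero_last_of_col_shift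
    (hM : ∀ j k, k ≠ Fin.last n → M j k = A j (k + 1)) :
    (adjugate A * M) 0 (Fin.last n) = (-1) ^ n * det M := by
  set v : Fin (n + 1) → R := fun j => M j (Fin.last n)
  have hrot : M = (A.updateCol 0 v).submatrix id (finRotate (n + 1)) := by
    ext j k
    rw [submatrix_apply, id_eq, finRotate_apply]
    by_cases hk : k = Fin.last n
    · rw [hk, Fin.last_add_one, updateCol_self]
    · rw [updateCol_ne (Fin.add_one_ne_zero_of_ne_last hk), hM j k hk]
  have hcramer : (adjugate A * M) 0 (Fin.last n) = det (A.updateCol 0 v) := by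
    rw [← cramer_apply, cramer_eq_adjugate_mulVec]
    rfl
  rw [hcramer, hrot, det_permute', sign_finRotate, Nat.add_sub_cancel]
  push_cast
  rw [← mul_assoc, ← pow_add, ← two_mul, pow_mul, neg_one_sq, one_pow, one_mul]

theorem adjugate_mul_mul_adjugate_zero_zero_of_col_shift
    (hM : ∀ j k, k ≠ Fin.last n → M j k = A j (k + 1)) :
    (adjugate A * M * adjugate A) 0 0 = (-1) ^ n * det M * adjugate A (Fin.last n) 0 := by
  rw [mul_apply, Finset.sum_eq_single (Fin.last n)
      (fun k _ hk => by rw [adjugate_mul_apply_zero_eq_zero_of_col_shift hM hk, zero_mul])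
      (by simp), adjugate_mul_apply_zero_last_of_col_shift hM]

theorem adjugate_mul_mul_adjugate_zero_zero_of_row_shift
    (hM : ∀ j k, j ≠ Fin.last n → M j k = A (j + 1) k) :
    (adjugate A * M * adjugate A) 0 0 = adjugate A 0 (Fin.last n) * ((-1) ^ n * det M) := by
  have h := adjugate_mul_mul_adjugate_zero_zero_of_col_shift (A := Aᵀ) (M := Mᵀ)
    fun j k hk => hM k j hk
  rw [← adjugate_transpose, det_transpose, ← transpose_mul, ← transpose_mul,
    transpose_apply, transpose_apply, ← Matrix.mul_assoc] at h
  rw [h, mul_comm]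

end ShiftedMatrices

theorem adjugate_mul_commutator_diagonal_mul_adjugate_apply_self {m : Type*} [Fintype m]
    [DecidableEq m] (A : Matrix m m R) (d : m → R) (i : m) :
    (adjugate A * (diagonal d * A - A * diagonal d) * adjugate A) i i = 0 := by
  have h : adjugate A * (diagonal d * A - A * diagonal d) * adjugate A
      = A.det • (adjugate A * diagonal d - diagonal d * adjugate A) := by
    simp only [Matrix.mul_sub, Matrix.sub_mul, Matrix.mul_assoc, mul_adjugate, smul_sub,
      ← Matrix.mul_assoc (adjugate A) A, adjugate_mul, Matrix.mul_smul, Matrix.smul_mul,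
      Matrix.mul_one, Matrix.one_mul]
  simp [h, mul_comm]

variable (c : ℤ → R)

theorem toeplitz_pred_sub_toeplitz_succ {a b : R}
    (hc : ∀ s : ℤ, c (s - 1) - c (s + 1) = (a + b * s) * c s) :
    toeplitz (fun m => c (m - 1)) n - toeplitz (fun m => c (m + 1)) n
      = a • toeplitz c n + b • (diagonal (fun j : Fin n => (j : R)) * toeplitz c n
          - toeplitz c n * diagonal (fun j : Fin n => (j : R))) := by
  ext j k
  simp [hc, diagonal_mul, mul_diagonal]
  ring

theorem det_toeplitz_pred_mul_sub_det_toeplitz_succ_mul {a b : R}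
    (hc : ∀ s : ℤ, c (s - 1) - c (s + 1) = (a + b * s) * c s) (n : ℕ) :
    det (toeplitz (fun m => c (m - 1)) (n + 1)) * det (toeplitz (fun m => c (m + 1)) n)
      - det (toeplitz (fun m => c (m + 1)) (n + 1)) * det (toeplitz (fun m => c (m - 1)) n)
      = a * (det (toeplitz c (n + 1)) * det (toeplitz c n)) := by
  set A := toeplitz c (n + 1)
  set D := diagonal (fun j : Fin (n + 1) => (j : R))
  have hpred : (adjugate A * toeplitz (fun m => c (m - 1)) (n + 1) * adjugate A) 0 0
      = det (toeplitz (fun m => c (m - 1)) (n + 1)) * det (toeplitz (fun m => c (m + 1)) n) := by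
    rw [adjugate_mul_mul_adjugate_zero_zero_of_col_shift
        (M := toeplitz (fun m => c (m - 1)) (n + 1)) (fun j k => toeplitz_pred_apply_of_ne_last c),
      adjugate_fin_succ_eq_det_submatrix, Fin.succAbove_zero, Fin.succAbove_last,
      toeplitz_submatrix_succ_castSucc, Fin.val_zero, Fin.val_last, zero_add, mul_mul_mul_comm,
      ← mul_pow]
    simp
  have hsucc : (adjugate A * toeplitz (fun m => c (m + 1)) (n + 1) * adjugate A) 0 0
      = det (toeplitz (fun m => c (m - 1)) n) * det (toeplitz (fun m => c (m + 1)) (n + 1)) := by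
    rw [adjugate_mul_mul_adjugate_zero_zero_of_row_shift
        (M := toeplitz (fun m => c (m + 1)) (n + 1)) (fun j k => toeplitz_succ_apply_of_ne_last c),
      adjugate_fin_succ_eq_det_submatrix, Fin.succAbove_zero, Fin.succAbove_last,
      toeplitz_submatrix_castSucc_succ, Fin.val_zero, Fin.val_last, add_zero, mul_mul_mul_comm,
      ← mul_pow]
    simp
  have hself : (adjugate A * A * adjugate A) 0 0 = det A * det (toeplitz c n) := by
    rw [adjugate_mul, Matrix.smul_mul, Matrix.one_mul, smul_apply, smul_eq_mul,
      adjugate_fin_succ_eq_det_submatrix, Fin.succAbove_zero, toeplitz_submatrix_succ_succ]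
    simp
  calc _ = (adjugate A * (toeplitz (fun m => c (m - 1)) (n + 1)
        - toeplitz (fun m => c (m + 1)) (n + 1)) * adjugate A) 0 0 := by
        rw [Matrix.mul_sub, Matrix.sub_mul, sub_apply, hpred, hsucc, mul_comm (det (toeplitz _ n))]
    _ = a * (adjugate A * A * adjugate A) 0 0
          + b * (adjugate A * (D * A - A * D) * adjugate A) 0 0 := by
        rw [toeplitz_pred_sub_toeplitz_succ c hc, Matrix.mul_add, Matrix.add_mul,
          Matrix.mul_smul, Matrix.smul_mul, Matrix.mul_smul, Matrix.smul_mul]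
        rfl
    _ = a * (det A * det (toeplitz c n)) := by
        rw [hself, adjugate_mul_commutator_diagonal_mul_adjugate_apply_self, mul_zero, add_zero]

end Matrix

open Matrix

theorem toeplitzDet_eq_det_toeplitz (μ : ℝ) (ε : ℤ) (N : ℕ) (t : ℝ) :
    toeplitzDet μ ε N t = det (toeplitz (fun m : ℤ => besselI (μ + (m + ε : ℤ)) √t) N) := by
  unfold toeplitzDet
  congr 1
  ext j k
  simp only [of_apply, toeplitz_apply]
  push_cast
  ring_nf

theorem stmt1_general (t μ : ℝ) (ht : 0 < t)
    (hD : ∀ N : ℕ, toeplitzDet μ 0 N t ≠ 0) :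
    ∀ N : ℕ, 1 ≤ N →
      rbcoef μ N t * rcoef μ (N - 1) t - rcoef μ N t * rbcoef μ (N - 1) t
        = -2 * μ / Real.sqrt t := by
  intro N hN
  obtain ⟨n, rfl⟩ := Nat.exists_eq_add_of_le' hN
  have hx : √t ≠ 0 := (Real.sqrt_pos.mpr ht).ne'
  have hrec (s : ℤ) : besselI (μ + (s - 1 : ℤ)) √t - besselI (μ + (s + 1 : ℤ)) √t
      = (2 * μ / √t + 2 / √t * s) * besselI (μ + s) √t := by
    push_cast
    rw [← add_sub_assoc, ← add_assoc, besselI_sub_one_sub_besselI_add_one hx]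
    ring
  have key := det_toeplitz_pred_mul_sub_det_toeplitz_succ_mul
    (fun m : ℤ => besselI (μ + m) √t) hrec n
  beta_reduce at key
  have hsign : ((-1 : ℝ) ^ (n + 1) * (-1) ^ n) = -1 := by
    rw [← pow_add]
    exact Odd.neg_one_pow ⟨n, by ring⟩
  have hD₀ := hD n
  have hD₁ := hD (n + 1)
  simp only [toeplitzDet_eq_det_toeplitz, add_zero] at hD₀ hD₁
  simp only [rcoef, rbcoef, toeplitzDet_eq_det_toeplitz, Nat.add_sub_cancel, add_zero,
    ← sub_eq_add_neg]
  field_simp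
  rw [hsign, key]
  field_simp

theorem stmt1 (t μ : ℝ) (ht : 0 < t)
    (hD : ∀ N : ℕ, toeplitzDet μ 0 N t ≠ 0)
    (hv : ∀ N : ℕ, 1 ≤ N → 1 - rcoef μ N t * rbcoef μ N t ≠ 0) :
    ∀ N : ℕ, 1 ≤ N →
      rbcoef μ N t * rcoef μ (N - 1) t - rcoef μ N t * rbcoef μ (N - 1) t
        = -2 * μ / Real.sqrt t :=
  stmt1_general t μ ht hD
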